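/- arXiv:1507.06919 — 2 statements merged into one kernel-verified Lean document; each statement's English description precedes it below -/
import Mathlib

section
/- If G is a disconnected (C₄,P₄,P₃∪K₂,3K₂)-free graph, then G is an empty graph, or G consists of exactly two non-trivial complete components plus possibly isolated vertices, or G has exactly one non-trivial component (which is (C₄,P₄,P₃∪K₂,3K₂)-free) plus isolated vertices. -/
open SimpleGraph

/-- A coloring of the vertices with colors `0, ..., k-1` which uses all `k` colors and such
that every pair of distinct colors appears on the endpoints of some edge. -/
def IsCompleteColoring {V : Type*} (G : SimpleGraph V) (c : V → ℕ) (k : ℕ) : Prop :=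
  (∀ v, c v < k) ∧ (∀ i, i < k → ∃ v, c v = i) ∧
    ∀ i j, i < k → j < k → i ≠ j → ∃ u w, G.Adj u w ∧ c u = i ∧ c w = j

/-- A proper coloring: adjacent vertices get distinct colors. -/
def IsProperColoring {V : Type*} (G : SimpleGraph V) (c : V → ℕ) : Prop :=
  ∀ u w, G.Adj u w → c u ≠ c w

/-- A Grundy coloring with `k` colors: proper, uses all `k` colors, and every vertex of
color `j` has, for each `i < j`, a neighbor colored `i`. -/
def IsGrundyColoring {V : Type*} (G : SimpleGraph V) (c : V → ℕ) (k : ℕ) : Prop :=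
  (∀ v, c v < k) ∧ (∀ i, i < k → ∃ v, c v = i) ∧ IsProperColoring G c ∧
    ∀ v i, i < c v → ∃ u, G.Adj u v ∧ c u = i

/-- The pseudoachromatic number `ψ`. -/
noncomputable def pseudoachromaticNumber {V : Type*} (G : SimpleGraph V) : ℕ :=
  sSup {k | ∃ c, IsCompleteColoring G c k}

/-- The achromatic number `α`. -/
noncomputable def achromaticNumber {V : Type*} (G : SimpleGraph V) : ℕ :=
  sSup {k | ∃ c, IsCompleteColoring G c k ∧ IsProperColoring G c}

/-- The Grundy number `Γ`. -/
noncomputable def grundyNumber {V : Type*} (G : SimpleGraph V) : ℕ :=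
  sSup {k | ∃ c, IsGrundyColoring G c k}

/-- The chromatic number `χ` (as a natural number). -/
noncomputable def chromNumber {V : Type*} (G : SimpleGraph V) : ℕ :=
  sInf {k | ∃ c : V → ℕ, (∀ v, c v < k) ∧ IsProperColoring G c}

/-- The clique number `ω`. -/
noncomputable def cliqueNumber {V : Type*} (G : SimpleGraph V) : ℕ :=
  sSup {n | ∃ s : Finset V, G.IsNClique n s}

/-- `G` is `H`-free: no induced subgraph of `G` is isomorphic to `H`. -/
def GraphFree {V W : Type*} (G : SimpleGraph V) (H : SimpleGraph W) : Prop :=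
  ∀ s : Set V, IsEmpty ((G.induce s) ≃g H)

/-- `G` is `ωψ`-perfect. -/
def OmegaPsiPerfect {V : Type*} (G : SimpleGraph V) : Prop :=
  ∀ s : Set V, cliqueNumber (G.induce s) = pseudoachromaticNumber (G.induce s)

/-- `G` is `χψ`-perfect. -/
def ChiPsiPerfect {V : Type*} (G : SimpleGraph V) : Prop :=
  ∀ s : Set V, chromNumber (G.induce s) = pseudoachromaticNumber (G.induce s)

/-- The path on 4 vertices. -/
def pathP4 : SimpleGraph (Fin 4) :=
  SimpleGraph.fromRel (fun a b => (b : ℕ) = (a : ℕ) + 1)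

/-- The cycle on 4 vertices. -/
def cycleC4 : SimpleGraph (Fin 4) :=
  SimpleGraph.fromRel (fun a b => b = a + 1)

/-- The disjoint union of a path on 3 vertices and an edge. -/
def graphP3K2 : SimpleGraph (Fin 5) :=
  SimpleGraph.fromRel (fun a b => (a, b) ∈ [((0 : Fin 5), (1 : Fin 5)), (1, 2), (3, 4)])

/-- The disjoint union of three edges. -/
def graph3K2 : SimpleGraph (Fin 6) :=
  SimpleGraph.fromRel (fun a b => (a, b) ∈ [((0 : Fin 6), (1 : Fin 6)), (2, 3), (4, 5)])

/-- The join of two graphs. -/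
def graphJoin {V W : Type*} (G : SimpleGraph V) (H : SimpleGraph W) : SimpleGraph (V ⊕ W) :=
  SimpleGraph.fromRel (fun x y =>
    match x, y with
    | Sum.inl a, Sum.inl b => G.Adj a b
    | Sum.inr a, Sum.inr b => H.Adj a b
    | _, _ => True)

/-- The disjoint union of two graphs. -/
def graphSum {V W : Type*} (G : SimpleGraph V) (H : SimpleGraph W) : SimpleGraph (V ⊕ W) :=
  SimpleGraph.fromRel (fun x y =>
    match x, y with
    | Sum.inl a, Sum.inl b => G.Adj a b
    | Sum.inr a, Sum.inr b => H.Adj a b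
    | _, _ => False)

/-- The disjoint union of a family of graphs. -/
def graphSigma {ι : Type} {U : ι → Type} (f : ∀ i, SimpleGraph (U i)) :
    SimpleGraph (Σ i, U i) :=
  SimpleGraph.fromRel (fun x y => ∃ h : x.1 = y.1, (f y.1).Adj (h ▸ x.2) y.2)

/-! If every edge lies in one component we are in the third case, since the forbidden induced
subgraphs stay forbidden in induced subgraphs. Otherwise there are edges `ab` and `cd` in different
components. A connected graph whose complement is complete multipartite is complete, so a
component that is not a clique contains an induced `P₃`, which together with an edge of another
component is an induced `P₃ ∪ K₂`; hence both components are cliques. An edge in a third component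
would give an induced `3K₂`. -/

section

variable {V W : Type*} {G : SimpleGraph V} {H : SimpleGraph W}

theorem graphFree_iff_not_isIndContained : GraphFree G H ↔ ¬ H ⊴ G := by
  simp only [GraphFree, isIndContained_iff_exists_iso_induce, not_exists, not_nonempty_iff]
  exact forall_congr' fun s =>
    ⟨fun h => ⟨fun e => h.false e.symm⟩, fun h => ⟨fun e => h.false e.symm⟩⟩

theorem GraphFree.induce (hG : GraphFree G H) (s : Set V) : GraphFree (G.induce s) H := by
  rw [graphFree_iff_not_isIndContained] at hG ⊢
  exact fun h => hG (h.trans (Embedding.induce s).isIndContained)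

end

namespace SimpleGraph

variable {V W : Type*} {G : SimpleGraph V} {H : SimpleGraph W}

theorem Preconnected.eq_top_of_isCompleteMultipartite_compl (hG : G.Preconnected)
    (h : Gᶜ.IsCompleteMultipartite) : G = ⊤ := by
  ext u v
  have h_not_compl_adj : ¬ Gᶜ.Adj u v := by
    induction (reachable_iff_reflTransGen u v).1 (hG u v) with
    | refl => exact Gᶜ.loopless.irrefl u
    | tail _ hadj ih => exact h.trans _ _ _ ih fun h' => ((compl_adj ..).1 h').2 hadj
  rw [compl_adj, not_and_not_right] at h_not_compl_adj
  exact ⟨Adj.ne, h_not_compl_adj⟩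

theorem Preconnected.pathGraph_three_isIndContained (hG : G.Preconnected) (hne : G ≠ ⊤) :
    pathGraph 3 ⊴ G := by
  rw [← compl_isIndContained_compl]
  exact (pathGraph3ComplEmbeddingOf fun h =>
    hne (hG.eq_top_of_isCompleteMultipartite_compl h)).isIndContained

def Embedding.sumElim {W' : Type*} {H' : SimpleGraph W'} (f : H ↪g G) (g : H' ↪g G)
    (h : ∀ x y, ¬ G.Reachable (f x) (g y)) : H ⊕g H' ↪g G where
  toFun := Sum.elim f g
  inj' := f.injective.sumElim g.injective fun x y hxy => h x y (hxy ▸ .rfl)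
  map_rel_iff' := by
    rintro (x | x) (y | y)
    · simp
    · simpa using fun hadj => h x y hadj.reachable
    · simpa using fun hadj => h y x hadj.symm.reachable
    · simp

def Adj.topEmbedding {u v : V} (huv : G.Adj u v) : (⊤ : SimpleGraph (Fin 2)) ↪g G where
  toFun := ![u, v]
  inj' := by intro i j; fin_cases i <;> fin_cases j <;> simp [huv.ne, huv.ne']
  map_rel_iff' {i j} := by
    change G.Adj (![u, v] i) (![u, v] j) ↔ _
    fin_cases i <;> fin_cases j <;> simp [huv, huv.symm]

theorem Adj.reachable_topEmbedding {u v : V} (huv : G.Adj u v) (i : Fin 2) :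
    G.Reachable u (huv.topEmbedding i) := by
  fin_cases i
  · rfl
  · exact huv.reachable

def graphP3K2IsoSum : graphP3K2 ≃g pathGraph 3 ⊕g (⊤ : SimpleGraph (Fin 2)) :=
  ⟨(finSumFinEquiv (m := 3) (n := 2)).symm, by
    intro a b
    fin_cases a <;> fin_cases b <;>
      simp [graphP3K2, pathGraph_adj, finSumFinEquiv, Fin.addCases, Fin.castLT, Fin.subNat]⟩

def graph3K2IsoSum :
    graph3K2 ≃g
      (⊤ : SimpleGraph (Fin 2)) ⊕g (⊤ : SimpleGraph (Fin 2)) ⊕g (⊤ : SimpleGraph (Fin 2)) :=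
  ⟨(finSumFinEquiv (m := 4) (n := 2)).symm.trans
    (Equiv.sumCongr (finSumFinEquiv (m := 2) (n := 2)).symm (Equiv.refl _)), by
    intro a b
    fin_cases a <;> fin_cases b <;>
      simp [graph3K2, finSumFinEquiv, Fin.addCases, Fin.castLT, Fin.subNat]⟩

theorem ConnectedComponent.isClique_supp_of_graphFree_graphP3K2 (hfree : GraphFree G graphP3K2)
    {C : G.ConnectedComponent} {c d : V} (hcd : G.Adj c d) (hc : c ∉ C.supp) :
    G.IsClique C.supp := by
  by_contra hC
  rw [← induce_eq_top] at hC
  obtain ⟨f⟩ := C.connected_toSimpleGraph.preconnected.pathGraph_three_isIndContained hC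
  let e := (Embedding.induce C.supp).comp f
  refine graphFree_iff_not_isIndContained.1 hfree <| graphP3K2IsoSum.isIndContained.trans
    (e.sumElim hcd.topEmbedding fun x y hr => hc ?_).isIndContained
  rw [ConnectedComponent.mem_supp_iff, ← (C.mem_supp_iff _).1 (f x).2]
  exact ConnectedComponent.sound ((hcd.reachable_topEmbedding y).trans hr.symm)

theorem reachable_or_reachable_of_graphFree_graph3K2 (hfree : GraphFree G graph3K2)
    {a b c d u v : V} (hab : G.Adj a b) (hcd : G.Adj c d) (hac : ¬ G.Reachable a c)
    (huv : G.Adj u v) : G.Reachable a u ∨ G.Reachable c u := by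
  by_contra! ⟨hau, hcu⟩
  let e := hab.topEmbedding.sumElim hcd.topEmbedding fun x y hr =>
    hac ((hab.reachable_topEmbedding x).trans (hr.trans (hcd.reachable_topEmbedding y).symm))
  refine graphFree_iff_not_isIndContained.1 hfree <| graph3K2IsoSum.isIndContained.trans
    (e.sumElim huv.topEmbedding ?_).isIndContained
  rintro (x | x) y hr
  · exact hau <|
      (hab.reachable_topEmbedding x).trans (hr.trans (huv.reachable_topEmbedding y).symm)
  · exact hcu <|
      (hcd.reachable_topEmbedding x).trans (hr.trans (huv.reachable_topEmbedding y).symm)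

end SimpleGraph

theorem stmt_12_general {V : Type*} (G : SimpleGraph V)
    (hC4 : GraphFree G cycleC4) (hP4 : GraphFree G pathP4)
    (hP3K2 : GraphFree G graphP3K2) (h3K2 : GraphFree G graph3K2) :
    (∀ u v : V, ¬ G.Adj u v) ∨
    (∃ A B : Set V, Disjoint A B ∧ A.Nontrivial ∧ B.Nontrivial ∧
      (∀ u ∈ A, ∀ v ∈ A, u ≠ v → G.Adj u v) ∧
      (∀ u ∈ B, ∀ v ∈ B, u ≠ v → G.Adj u v) ∧
      (∀ u v : V, G.Adj u v → (u ∈ A ∧ v ∈ A) ∨ (u ∈ B ∧ v ∈ B))) ∨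
    (∃ A : Set V, A.Nontrivial ∧ (G.induce A).Connected ∧
      (∀ u v : V, G.Adj u v → u ∈ A ∧ v ∈ A) ∧
      GraphFree (G.induce A) cycleC4 ∧ GraphFree (G.induce A) pathP4 ∧
      GraphFree (G.induce A) graphP3K2 ∧ GraphFree (G.induce A) graph3K2) := by
  by_cases hempty : ∀ u v : V, ¬ G.Adj u v
  · exact Or.inl hempty
  push Not at hempty
  obtain ⟨a, b, hab⟩ := hempty
  have mem_supp {x u : V} (h : G.Reachable x u) : u ∈ (G.connectedComponentMk x).supp :=
    ConnectedComponent.sound h.symm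
  have supp_nontrivial {u v : V} (huv : G.Adj u v) : (G.connectedComponentMk u).supp.Nontrivial :=
    ⟨u, rfl, v, mem_supp huv.reachable, huv.ne⟩
  set A := (G.connectedComponentMk a).supp
  by_cases hout : ∃ c d, G.Adj c d ∧ c ∉ A
  · obtain ⟨c, d, hcd, hcA⟩ := hout
    have hac : ¬ G.Reachable a c := fun h => hcA (mem_supp h)
    refine Or.inr (Or.inl ⟨A, (G.connectedComponentMk c).supp,
      G.pairwise_disjoint_supp_connectedComponent (Ne.symm hcA),
      supp_nontrivial hab, supp_nontrivial hcd,
      ConnectedComponent.isClique_supp_of_graphFree_graphP3K2 hP3K2 hcd hcA,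
      ConnectedComponent.isClique_supp_of_graphFree_graphP3K2 hP3K2 hab
        fun h => hac (ConnectedComponent.exact h), fun u v huv => ?_⟩)
    rcases reachable_or_reachable_of_graphFree_graph3K2 h3K2 hab hcd hac huv with hu | hu
    · exact Or.inl ⟨mem_supp hu, mem_supp (hu.trans huv.reachable)⟩
    · exact Or.inr ⟨mem_supp hu, mem_supp (hu.trans huv.reachable)⟩
  · push Not at hout
    refine Or.inr (Or.inr ⟨A, supp_nontrivial hab,
      (G.connectedComponentMk a).connected_toSimpleGraph, fun u v huv => ?_,
      hC4.induce A, hP4.induce A, hP3K2.induce A, h3K2.induce A⟩)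
    exact ⟨hout u v huv, (G.connectedComponentMk a).mem_supp_of_adj_mem_supp (hout u v huv) huv⟩

theorem stmt_12 {V : Type*} [Fintype V] [Nonempty V] (G : SimpleGraph V)
    (hdisc : ¬ G.Connected)
    (hC4 : GraphFree G cycleC4) (hP4 : GraphFree G pathP4)
    (hP3K2 : GraphFree G graphP3K2) (h3K2 : GraphFree G graph3K2) :
    (∀ u v : V, ¬ G.Adj u v) ∨
    (∃ A B : Set V, Disjoint A B ∧ A.Nontrivial ∧ B.Nontrivial ∧
      (∀ u ∈ A, ∀ v ∈ A, u ≠ v → G.Adj u v) ∧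
      (∀ u ∈ B, ∀ v ∈ B, u ≠ v → G.Adj u v) ∧
      (∀ u v : V, G.Adj u v → (u ∈ A ∧ v ∈ A) ∨ (u ∈ B ∧ v ∈ B))) ∨
    (∃ A : Set V, A.Nontrivial ∧ (G.induce A).Connected ∧
      (∀ u v : V, G.Adj u v → u ∈ A ∧ v ∈ A) ∧
      GraphFree (G.induce A) cycleC4 ∧ GraphFree (G.induce A) pathP4 ∧
      GraphFree (G.induce A) graphP3K2 ∧ GraphFree (G.induce A) graph3K2) :=
  stmt_12_general G hC4 hP4 hP3K2 h3K2
end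

section
/- For any graph G: G is ωψ-perfect if and only if G is χψ-perfect. -/
open SimpleGraph

/-!
One direction is the chain `ω ≤ χ ≤ ψ`: an optimal proper colouring is complete, since two
colour classes with no edge between them could be merged.

Conversely, an induced path `a - b - c - d` with `a ≁ c`, `b ≁ d` (an induced `P₄` or `C₄`) has
`χ = 2 < 3 ≤ ψ`, so in a `χψ`-perfect graph adjacent vertices have nested closed
neighbourhoods. In such a graph the closed neighbourhood of a vertex `v` for which it is smallest
is a clique, so `v` has fewer than `ω` neighbours and can be coloured last; hence `χ ≤ ω` on
every induced subgraph.
-/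

open scoped Finset

namespace SimpleGraph

variable {V : Type*} (G : SimpleGraph V)

lemma _root_.IsProperColoring.injOn_of_isClique {G : SimpleGraph V} {c : V → ℕ}
    (hc : IsProperColoring G c) {s : Set V} (hs : G.IsClique s) : s.InjOn c :=
  fun _ hu _ hw huw => by_contra fun hne => hc _ _ (hs hu hw hne) huw

lemma chromNumber_le {c : V → ℕ} {k : ℕ} (hb : ∀ v, c v < k) (hc : IsProperColoring G c) :
    chromNumber G ≤ k :=
  Nat.sInf_le ⟨c, hb, hc⟩

lemma chromNumber_lt_of_forall_ne {c : V → ℕ} {k i : ℕ} (hb : ∀ v, c v < k)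
    (hc : IsProperColoring G c) (hi : i < k) (hmiss : ∀ v, c v ≠ i) : chromNumber G < k := by
  have : chromNumber G ≤ k - 1 := by
    refine G.chromNumber_le (c := fun v => if c v < i then c v else c v - 1) (fun v => ?_)
      (fun u w huw h => ?_)
    · have := hb v
      have := hmiss v
      split_ifs <;> omega
    · have := hc u w huw
      have := hmiss u
      have := hmiss w
      dsimp only at h
      split_ifs at h <;> omega
  omega

section Finite

variable [Finite V]

lemma bddAbove_cliqueSizes : BddAbove {n | ∃ s : Finset V, G.IsNClique n s} := by
  have := Fintype.ofFinite V
  refine ⟨Fintype.card V, ?_⟩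
  rintro n ⟨s, hs⟩
  exact hs.card_eq ▸ s.card_le_univ

lemma bddAbove_completeColorings : BddAbove {k | ∃ c, IsCompleteColoring G c k} := by
  have := Fintype.ofFinite V
  refine ⟨Fintype.card V, ?_⟩
  rintro k ⟨c, -, hsurj, -⟩
  choose f hf using fun i : Fin k => hsurj i i.2
  simpa using Fintype.card_le_of_injective f fun i j hij => Fin.ext <| by
    rw [← hf i, ← hf j, hij]

lemma IsNClique.le_cliqueNumber {G : SimpleGraph V} {n : ℕ} {s : Finset V}
    (hs : G.IsNClique n s) : n ≤ cliqueNumber G :=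
  le_csSup (bddAbove_cliqueSizes G) ⟨s, hs⟩

lemma _root_.IsCompleteColoring.le_pseudoachromaticNumber {G : SimpleGraph V} {c : V → ℕ} {k : ℕ}
    (hc : IsCompleteColoring G c k) : k ≤ pseudoachromaticNumber G :=
  le_csSup (bddAbove_completeColorings G) ⟨c, hc⟩

lemma exists_properColoring_lt_chromNumber :
    ∃ c : V → ℕ, (∀ v, c v < chromNumber G) ∧ IsProperColoring G c := by
  have := Fintype.ofFinite V
  refine Nat.sInf_mem (s := {k | ∃ c : V → ℕ, (∀ v, c v < k) ∧ IsProperColoring G c})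
    ⟨Fintype.card V, fun v => Fintype.equivFin V v, fun v => (Fintype.equivFin V v).2,
      fun u w huw h => G.ne_of_adj huw ((Fintype.equivFin V).injective (Fin.ext h))⟩

lemma cliqueNumber_le_chromNumber : cliqueNumber G ≤ chromNumber G := by
  obtain ⟨c, hb, hc⟩ := exists_properColoring_lt_chromNumber G
  refine csSup_le ⟨0, ∅, by simp⟩ ?_
  rintro n ⟨s, hs⟩
  calc n = s.card := hs.card_eq.symm
    _ ≤ (Finset.range (chromNumber G)).card :=
      Finset.card_le_card_of_injOn c (fun v _ => Finset.mem_range.2 (hb v))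
        (hc.injOn_of_isClique hs.isClique)
    _ = chromNumber G := Finset.card_range _

lemma chromNumber_le_pseudoachromaticNumber : chromNumber G ≤ pseudoachromaticNumber G := by
  obtain ⟨c, hb, hc⟩ := exists_properColoring_lt_chromNumber G
  have hsurj : ∀ i < chromNumber G, ∃ v, c v = i := fun i hi => by
    by_contra! h
    exact (chromNumber_lt_of_forall_ne G hb hc hi h).false
  refine IsCompleteColoring.le_pseudoachromaticNumber ⟨hb, hsurj, fun i j hi hj hij => ?_⟩
  by_contra! hno
  -- with no edge between the classes `i` and `j`, recolouring `j` as `i` frees the colour `j`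
  refine (chromNumber_lt_of_forall_ne G (c := fun v => if c v = j then i else c v)
    (fun v => ?_) (fun u w huw h => ?_) hj (fun v => ?_)).false
  · split_ifs
    exacts [hi, hb v]
  · have := hc u w huw
    have := hno u w huw
    have := hno w u huw.symm
    dsimp only at h
    split_ifs at h <;> grind
  · split_ifs with h
    exacts [hij, h]

end Finite

def closedNeighborSet (v : V) : Set V := insert v (G.neighborSet v)

def HasNestedClosedNbhds : Prop :=
  ∀ u w, G.Adj u w →
    G.closedNeighborSet u ⊆ G.closedNeighborSet w ∨ G.closedNeighborSet w ⊆ G.closedNeighborSet u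

lemma closedNeighborSet_induce (s : Set V) (u : s) :
    (G.induce s).closedNeighborSet u = (↑) ⁻¹' G.closedNeighborSet u := by
  ext w
  simp [closedNeighborSet, Subtype.ext_iff]

variable {G}

lemma HasNestedClosedNbhds.induce (hG : G.HasNestedClosedNbhds) (s : Set V) :
    (G.induce s).HasNestedClosedNbhds := by
  intro u w huw
  simp only [closedNeighborSet_induce]
  exact (hG u w huw).imp (fun h => Set.preimage_mono h) (fun h => Set.preimage_mono h)

open Classical in
/-- For a neighbour `p` of `v`, nestedness and the minimality of `v` force
`N[v] ∩ s ⊆ N[p] ∩ s`. -/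
lemma HasNestedClosedNbhds.isClique_of_minimal (hG : G.HasNestedClosedNbhds) {s : Finset V}
    {v : V} (hmin : ∀ u ∈ s,
      #{x ∈ s | x ∈ G.closedNeighborSet v} ≤ #{x ∈ s | x ∈ G.closedNeighborSet u}) :
    G.IsClique ({x ∈ s | x ∈ G.closedNeighborSet v} : Finset V) := by
  intro p hp q hq hpq
  simp only [Finset.coe_filter, Set.mem_ofPred_eq] at hp hq
  have hsub : {x ∈ s | x ∈ G.closedNeighborSet v} ⊆ {x ∈ s | x ∈ G.closedNeighborSet p} := by
    rcases eq_or_ne p v with rfl | hpv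
    · rfl
    have hpv' : G.Adj p v := by simpa [closedNeighborSet, hpv, adj_comm] using hp.2
    rcases hG p v hpv' with h | h
    · exact (Finset.eq_of_subset_of_card_le
        (Finset.monotone_filter_right s fun x _ hx => h hx) (hmin p hp.1)).ge
    · exact Finset.monotone_filter_right s fun x _ hx => h hx
  have hqp := (Finset.mem_filter.1 (hsub (Finset.mem_filter.2 hq))).2
  simpa [closedNeighborSet, hpq.symm] using hqp

open Classical in
lemma HasNestedClosedNbhds.exists_coloring_on [Finite V] (hG : G.HasNestedClosedNbhds)
    (s : Finset V) : ∃ c : V → ℕ,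
      (∀ u ∈ s, ∀ w ∈ s, G.Adj u w → c u ≠ c w) ∧ ∀ v ∈ s, c v < cliqueNumber G := by
  induction s using Finset.strongInduction with
  | H s ih =>
  rcases s.eq_empty_or_nonempty with rfl | hs
  · exact ⟨fun _ => 0, by simp, by simp⟩
  obtain ⟨v, hv, hmin⟩ := s.exists_min_image (fun u => #{x ∈ s | x ∈ G.closedNeighborSet u}) hs
  set N := {x ∈ s | x ∈ G.closedNeighborSet v}
  have hvN : v ∈ N := Finset.mem_filter.2 ⟨hv, Set.mem_insert v _⟩
  have hN : #N ≤ cliqueNumber G := IsNClique.le_cliqueNumber ⟨hG.isClique_of_minimal hmin, rfl⟩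
  obtain ⟨c, hc, hb⟩ := ih (s.erase v) (Finset.erase_ssubset hv)
  -- `v` has fewer than `cliqueNumber G` neighbours in `s`, so some colour is free for it
  obtain ⟨m, hm, hmN⟩ : ∃ m ∈ Finset.range (cliqueNumber G), m ∉ (N.erase v).image c := by
    refine Finset.exists_mem_notMem_of_card_lt_card ?_
    calc #((N.erase v).image c) ≤ #(N.erase v) := Finset.card_image_le
      _ < #N := Finset.card_erase_lt_of_mem hvN
      _ ≤ #(Finset.range (cliqueNumber G)) := by simpa using hN
  have hfree : ∀ w ∈ s, G.Adj v w → c w ≠ m := fun w hw hvw hcw =>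
    hmN (Finset.mem_image.2 ⟨w, Finset.mem_erase.2 ⟨hvw.ne',
      Finset.mem_filter.2 ⟨hw, Set.mem_insert_of_mem _ hvw⟩⟩, hcw⟩)
  refine ⟨Function.update c v m, fun u hu w hw huw => ?_, fun u hu => ?_⟩
  · rcases eq_or_ne u v with rfl | huv
    · simpa [huw.ne'] using (hfree w hw huw).symm
    rcases eq_or_ne w v with rfl | hwv
    · simpa [huv] using hfree u hu huw.symm
    simpa [huv, hwv] using hc u (Finset.mem_erase.2 ⟨huv, hu⟩) w (Finset.mem_erase.2 ⟨hwv, hw⟩) huw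
  · rcases eq_or_ne u v with rfl | huv
    · simpa using hm
    · simpa [huv] using hb u (Finset.mem_erase.2 ⟨huv, hu⟩)

lemma HasNestedClosedNbhds.chromNumber_le_cliqueNumber [Finite V]
    (hG : G.HasNestedClosedNbhds) : chromNumber G ≤ cliqueNumber G := by
  have := Fintype.ofFinite V
  obtain ⟨c, hc, hb⟩ := hG.exists_coloring_on Finset.univ
  exact G.chromNumber_le (fun v => hb v (Finset.mem_univ v))
    fun u w => hc u (Finset.mem_univ u) w (Finset.mem_univ w)

variable (G)

lemma chromNumber_induce_le {t : Set V} {f : V → ℕ} {k : ℕ} (hb : ∀ v ∈ t, f v < k)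
    (hf : ∀ u ∈ t, ∀ w ∈ t, G.Adj u w → f u ≠ f w) : chromNumber (G.induce t) ≤ k :=
  chromNumber_le _ (c := fun v : t => f v) (fun v => hb v v.2) fun u w h => hf u u.2 w w.2 h

lemma le_pseudoachromaticNumber_induce [Finite V] {t : Set V} {f : V → ℕ} {k : ℕ} (hk : 2 ≤ k)
    (hb : ∀ v ∈ t, f v < k)
    (hpair : ∀ i j, i < j → j < k → ∃ u ∈ t, ∃ w ∈ t, G.Adj u w ∧ f u = i ∧ f w = j) :
    k ≤ pseudoachromaticNumber (G.induce t) := by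
  refine IsCompleteColoring.le_pseudoachromaticNumber (c := fun v : t => f v)
    ⟨fun v => hb v v.2, fun i hi => ?_, fun i j hi hj hij => ?_⟩
  · rcases Nat.eq_zero_or_pos i with rfl | hi0
    · obtain ⟨u, hu, -, -, -, hfu, -⟩ := hpair 0 1 one_pos hk
      exact ⟨⟨u, hu⟩, hfu⟩
    · obtain ⟨-, -, w, hw, -, -, hfw⟩ := hpair 0 i hi0 hi
      exact ⟨⟨w, hw⟩, hfw⟩
  · rcases hij.lt_or_gt with hij | hji
    · obtain ⟨u, hu, w, hw, huw, hfu, hfw⟩ := hpair i j hij hj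
      exact ⟨⟨u, hu⟩, ⟨w, hw⟩, huw, hfu, hfw⟩
    · obtain ⟨u, hu, w, hw, huw, hfu, hfw⟩ := hpair j i hji hi
      exact ⟨⟨w, hw⟩, ⟨u, hu⟩, huw.symm, hfw, hfu⟩

/-- The colouring `b, d ↦ 0`, `a, c ↦ 1` is proper, while `b ↦ 0`, `c ↦ 1`, `a, d ↦ 2` is
complete. -/
lemma chromNumber_lt_pseudoachromaticNumber_induce_of_path [Finite V] {a b c d : V}
    (hab : G.Adj a b) (hbc : G.Adj b c) (hcd : G.Adj c d) (hac : ¬G.Adj a c) (hbd : ¬G.Adj b d)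
    (hac' : a ≠ c) (hbd' : b ≠ d) :
    chromNumber (G.induce {a, b, c, d}) < pseudoachromaticNumber (G.induce {a, b, c, d}) := by
  classical
  have had : a ≠ d := by rintro rfl; exact hac hcd.symm
  have hab' := hab.ne
  have hbc' := hbc.ne
  have hcd' := hcd.ne
  calc chromNumber (G.induce {a, b, c, d}) ≤ 2 := by
        refine G.chromNumber_induce_le (f := fun v => if v = b ∨ v = d then 0 else 1)
          (fun v _ => by split_ifs <;> omega) fun u hu w hw huw => ?_
        simp only [Set.mem_insert_iff, Set.mem_singleton_iff] at hu hw
        rcases hu with rfl | rfl | rfl | rfl <;> rcases hw with rfl | rfl | rfl | rfl <;>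
          grind [adj_comm, SimpleGraph.irrefl]
    _ < 3 := by norm_num
    _ ≤ pseudoachromaticNumber (G.induce {a, b, c, d}) := by
        refine G.le_pseudoachromaticNumber_induce
          (f := fun v => if v = b then 0 else if v = c then 1 else 2) (by norm_num)
          (fun v _ => by split_ifs <;> omega) fun i j hij hj => ?_
        interval_cases j <;> interval_cases i
        · exact ⟨b, by simp, c, by simp, hbc, by simp, by simp [hbc'.symm]⟩
        · exact ⟨b, by simp, a, by simp, hab.symm, by simp, by simp [hab', hac']⟩
        · exact ⟨c, by simp, d, by simp, hcd, by simp [hbc'.symm], by simp [hbd'.symm, hcd'.symm]⟩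

end SimpleGraph

lemma ChiPsiPerfect.hasNestedClosedNbhds {V : Type*} [Finite V] {G : SimpleGraph V}
    (hG : ChiPsiPerfect G) : G.HasNestedClosedNbhds := by
  intro u w huw
  by_contra! h
  obtain ⟨x, hxu, hxw⟩ := Set.not_subset.1 h.1
  obtain ⟨y, hyw, hyu⟩ := Set.not_subset.1 h.2
  simp only [SimpleGraph.closedNeighborSet, Set.mem_insert_iff, SimpleGraph.mem_neighborSet,
    not_or] at hxu hxw hyw hyu
  have hux : G.Adj u x := hxu.resolve_left fun hxu => hxw.2 (hxu ▸ huw.symm)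
  have hwy : G.Adj w y := hyw.resolve_left fun hyw => hyu.2 (hyw ▸ huw)
  exact (G.chromNumber_lt_pseudoachromaticNumber_induce_of_path hux.symm huw hwy
    (fun h => hxw.2 h.symm) hyu.2 hxw.1 (Ne.symm hyu.1) |>.ne) (hG _)

theorem stmt_18 {V : Type*} [Fintype V] (G : SimpleGraph V) :
    OmegaPsiPerfect G ↔ ChiPsiPerfect G := by
  refine ⟨fun h s => ?_, fun h s => ?_⟩
  · have := h s
    have := (G.induce s).cliqueNumber_le_chromNumber
    have := (G.induce s).chromNumber_le_pseudoachromaticNumber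
    omega
  · have := h s
    have := (G.induce s).cliqueNumber_le_chromNumber
    have := (h.hasNestedClosedNbhds.induce s).chromNumber_le_cliqueNumber
    omega
end
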